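/- In the unitary Cayley graph of Z_n with n = 2^{r₁} p₂^{r₂}⋯p_t^{r_t} (t ≥ 2, odd primes p₂ < ⋯ < p_t), every 2-packing has at most two vertices. -/

import Mathlib

/-- The unitary Cayley graph of a commutative ring: vertices are ring elements,
with `x ~ y` iff `x ≠ y` and `x - y` is a unit. -/
def unitaryCayley (R : Type*) [CommRing R] : SimpleGraph R where
  Adj x y := x ≠ y ∧ IsUnit (x - y)
  symm := by
    constructor
    rintro x y ⟨hne, hu⟩
    exact ⟨hne.symm, by simpa [neg_sub] using hu.neg⟩
  loopless := by constructor; rintro x ⟨h, -⟩; exact h rfl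

/-- A packing `k`-coloring: every vertex gets a color in `{1, …, k}`, and any two
distinct vertices with the same color `i` are at distance greater than `i`
(`edist` equals `⊤` for unreachable pairs, which counts as distance greater than `i`). -/
def SimpleGraph.IsPackingColoring {V : Type*} (G : SimpleGraph V) (k : ℕ) (c : V → ℕ) : Prop :=
  (∀ v, 1 ≤ c v ∧ c v ≤ k) ∧
    ∀ u v, u ≠ v → c u = c v → (c u : ℕ∞) < G.edist u v

/-- The packing chromatic number: the least `k` admitting a packing `k`-coloring. -/
noncomputable def SimpleGraph.packingChromaticNumber {V : Type*} (G : SimpleGraph V) : ℕ :=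
  sInf {k | ∃ c : V → ℕ, G.IsPackingColoring k c}

/-- The independence number: the largest cardinality of a set of pairwise
nonadjacent vertices. -/
noncomputable def SimpleGraph.indepNum' {V : Type*} (G : SimpleGraph V) : ℕ :=
  sSup {n | ∃ s : Finset V, (∀ u ∈ s, ∀ v ∈ s, u ≠ v → ¬ G.Adj u v) ∧ s.card = n}

/-- The tensor (direct, categorical) product of two simple graphs. -/
def tensorProd {V W : Type*} (G : SimpleGraph V) (H : SimpleGraph W) :
    SimpleGraph (V × W) where
  Adj a b := G.Adj a.1 b.1 ∧ H.Adj a.2 b.2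
  symm := ⟨fun _ _ ⟨h1, h2⟩ => ⟨h1.symm, h2.symm⟩⟩
  loopless := ⟨fun a h => G.irrefl h.1⟩

/-- The tensor (direct, categorical) product of a family of simple graphs. -/
def tensorPi {ι : Type*} [Nonempty ι] {V : ι → Type*} (G : ∀ i, SimpleGraph (V i)) :
    SimpleGraph (∀ i, V i) where
  Adj a b := ∀ i, (G i).Adj (a i) (b i)
  symm := ⟨fun _ _ h i => (h i).symm⟩

/-! If `n` is even and `d ∈ ZMod n` is even, then `d` is a sum of two units: with
`a = 2 (d - 1) ^ φ n - 1`, Fermat's little theorem gives, modulo each prime `p ∣ n`,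
`a ≡ 1` and `d - a ≡ d - 1` when `d ≢ 1`, and `a ≡ -1`, `d - a ≡ 2` when `d ≡ 1` (so `p` is odd).
Hence vertices of the same parity are at distance at most `2`, and a 2-packing injects into
`ZMod 2`. -/

namespace ZMod

theorem isUnit_of_forall_castHom_ne_zero {n : ℕ} [NeZero n] (x : ZMod n)
    (h : ∀ p, p.Prime → ∀ hp : p ∣ n, castHom hp (ZMod p) x ≠ 0) : IsUnit x := by
  rw [← natCast_zmod_val x, isUnit_iff_coprime]
  refine Nat.coprime_of_dvd fun p hp hpx hpn => h p hp hpn ?_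
  rw [← natCast_zmod_val x, map_natCast, natCast_eq_zero_iff]
  exact hpx

theorem two_mul_sub_one_pow_sub_one_ne_zero {p k : ℕ} [Fact p.Prime] (hk₀ : k ≠ 0)
    (hk : p - 1 ∣ k) {d : ZMod p} (hd : p = 2 → d ≠ 1) :
    2 * (d - 1) ^ k - 1 ≠ 0 ∧ d - (2 * (d - 1) ^ k - 1) ≠ 0 := by
  by_cases hd1 : d = 1
  · have h2 : (2 : ZMod p) ≠ 0 := by
      intro h
      have := (natCast_eq_zero_iff 2 p).mp (by exact_mod_cast h)
      exact hd ((Nat.prime_dvd_prime_iff_eq Fact.out Nat.prime_two).mp this) hd1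
    subst hd1
    rw [sub_self, zero_pow hk₀]
    norm_num [h2]
  · obtain ⟨m, rfl⟩ := hk
    rw [pow_mul, pow_card_sub_one_eq_one (sub_ne_zero.mpr hd1), one_pow]
    norm_num [sub_eq_zero, hd1]

theorem exists_isUnit_and_isUnit_sub {n : ℕ} [NeZero n] (d : ZMod n)
    (hd : ∀ h2 : 2 ∣ n, castHom h2 (ZMod 2) d = 0) :
    ∃ a : ZMod n, IsUnit a ∧ IsUnit (d - a) := by
  have hmod (p : ℕ) (hp : p.Prime) (hpn : p ∣ n) :
      castHom hpn (ZMod p) (2 * (d - 1) ^ n.totient - 1) ≠ 0 ∧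
        castHom hpn (ZMod p) (d - (2 * (d - 1) ^ n.totient - 1)) ≠ 0 := by
    have : Fact p.Prime := ⟨hp⟩
    simp only [map_sub, map_mul, map_pow, map_one, map_ofNat]
    refine two_mul_sub_one_pow_sub_one_ne_zero (Nat.totient_pos.mpr (NeZero.pos n)).ne'
      (Nat.totient_prime hp ▸ Nat.totient_dvd_of_dvd hpn) ?_
    rintro rfl h
    exact zero_ne_one ((hd hpn).symm.trans h)
  exact ⟨_, isUnit_of_forall_castHom_ne_zero _ fun p hp hpn => (hmod p hp hpn).1,
    isUnit_of_forall_castHom_ne_zero _ fun p hp hpn => (hmod p hp hpn).2⟩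

end ZMod

section

variable {R : Type*} [CommRing R] [Nontrivial R]

theorem unitaryCayley_adj_of_isUnit_sub {x y : R} (h : IsUnit (x - y)) :
    (unitaryCayley R).Adj x y :=
  ⟨sub_ne_zero.mp h.ne_zero, h⟩

theorem unitaryCayley_edist_le_two {x y a : R} (ha : IsUnit a) (hxy : IsUnit (x - y - a)) :
    (unitaryCayley R).edist x y ≤ 2 := by
  have h₁ : (unitaryCayley R).Adj x (y + a) :=
    unitaryCayley_adj_of_isUnit_sub (by rwa [← sub_sub])
  have h₂ : (unitaryCayley R).Adj (y + a) y :=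
    unitaryCayley_adj_of_isUnit_sub (by rwa [add_sub_cancel_left])
  simpa using SimpleGraph.edist_le (h₁.toWalk.append h₂.toWalk)

end

theorem stmt12 (n : ℕ) (ht : 2 ≤ n.primeFactors.card) (heven : n.minFac = 2)
    (s : Finset (ZMod n))
    (hs : ∀ u ∈ s, ∀ v ∈ s, u ≠ v → (2 : ℕ∞) < (unitaryCayley (ZMod n)).edist u v) :
    s.card ≤ 2 := by
  have : NeZero n := ⟨by rintro rfl; simp at ht⟩
  have : Nontrivial (ZMod n) := ZMod.nontrivial_iff.mpr (by rintro rfl; simp at heven)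
  have h2 : 2 ∣ n := heven ▸ n.minFac_dvd
  have hinj : Set.InjOn (ZMod.castHom h2 (ZMod 2)) s := by
    intro u hu v hv huv
    by_contra hne
    obtain ⟨a, ha, hda⟩ := ZMod.exists_isUnit_and_isUnit_sub (u - v) fun _ => by
      rw [map_sub, huv, sub_self]
    exact (hs u hu v hv hne).not_ge (unitaryCayley_edist_le_two ha hda)
  simpa using Finset.card_le_card_of_injOn _ (fun _ _ => Finset.mem_univ _) hinj
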